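/- Let n and k be natural numbers with k ∈ {n−1, n}, k ≥ 4, and k a power of 2. Then every element of order k in the symmetric group S_n is a k-cycle, hence an odd permutation; consequently, the alternating group A_n is not generated by any set of elements of S_n each of which has order k. -/
import Mathlib


/-- If `k ∈ {n-1, n}`, `k ≥ 4` and `k` is a power of `2`, then every element of order `k`
in `S_n` is a `k`-cycle, hence an odd permutation; consequently `A_n` is not generated by
any set of elements of `S_n` of order `k`. -/
theorem alternatingGroup_not_generated_when_k_is_two_power_near_n
    (n k : ℕ) (hk4 : 4 ≤ k) (hpow : ∃ m : ℕ, k = 2 ^ m) (hkn : k = n - 1 ∨ k = n) :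
    (∀ g : Equiv.Perm (Fin n), orderOf g = k →
      (g.IsCycle ∧ g.support.card = k) ∧ Equiv.Perm.sign g = -1) ∧
      ∀ S : Set (Equiv.Perm (Fin n)), (∀ g ∈ S, orderOf g = k) →
        Subgroup.closure S ≠ alternatingGroup (Fin n) := by
  obtain ⟨m, rfl⟩ := hpow
  have hn4 : 4 ≤ n := by
    rcases hkn with h | h <;> omega
  have main : ∀ g : Equiv.Perm (Fin n), orderOf g = 2 ^ m →
      (g.IsCycle ∧ g.support.card = 2 ^ m) ∧ Equiv.Perm.sign g = -1 := by
    intro g hg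
    have hlcm : g.cycleType.lcm = 2 ^ m := by rw [Equiv.Perm.lcm_cycleType, hg]
    -- every cycle length divides 2^m
    have hdvd : ∀ a ∈ g.cycleType, a ∣ 2 ^ m := fun a ha => hlcm ▸ Multiset.dvd_lcm ha
    have hm1 : 1 ≤ m := by
      by_contra h
      interval_cases m <;> omega
    -- 2^m is a member of cycleType
    have hmem : (2 ^ m) ∈ g.cycleType := by
      by_contra hmem
      have h2 : g.cycleType.lcm ∣ 2 ^ (m - 1) := by
        apply Multiset.lcm_dvd.mpr
        intro a ha
        obtain ⟨j, hj, rfl⟩ := (Nat.dvd_prime_pow Nat.prime_two).mp (hdvd a ha)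
        have : j ≠ m := by rintro rfl; exact hmem ha
        exact pow_dvd_pow 2 (by omega)
      rw [hlcm] at h2
      have := Nat.le_of_dvd (by positivity) h2
      have : (2:ℕ) ^ (m-1) < 2 ^ m := Nat.pow_lt_pow_right one_lt_two (by omega)
      omega
    -- the rest of the cycle type is empty
    have hsum : g.cycleType.sum = g.support.card := Equiv.Perm.sum_cycleType g
    have hcard : g.support.card ≤ n := (Finset.card_le_card (Finset.subset_univ _)).trans
      (by simp)
    have hrest : g.cycleType.erase (2 ^ m) = 0 := by
      by_contra h
      obtain ⟨b, hb⟩ := Multiset.exists_mem_of_ne_zero h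
      have hb2 : 2 ≤ b := Equiv.Perm.two_le_of_mem_cycleType (Multiset.mem_of_mem_erase hb)
      have : 2 ^ m + b ≤ g.cycleType.sum := by
        rw [← Multiset.cons_erase hmem, Multiset.sum_cons]
        exact Nat.add_le_add_left (Multiset.le_sum_of_mem hb) _
      rcases hkn with hk | hk <;> omega
    have hct : g.cycleType = {2 ^ m} := by
      rw [← Multiset.cons_erase hmem, hrest]; rfl
    have hcyc : g.IsCycle := Equiv.Perm.card_cycleType_eq_one.mp (by rw [hct]; rfl)
    have hsupp : g.support.card = 2 ^ m := by
      rw [← hsum, hct, Multiset.sum_singleton]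
    refine ⟨⟨hcyc, hsupp⟩, ?_⟩
    rw [hcyc.sign, hsupp, Even.neg_one_pow ⟨2 ^ (m-1), by
      rw [← two_mul, ← pow_succ']; congr 1; omega⟩]
  refine ⟨main, ?_⟩
  intro S hS hcl
  rcases Set.eq_empty_or_nonempty S with rfl | ⟨g, hg⟩
  · rw [Subgroup.closure_empty] at hcl
    -- A_n is nontrivial for n ≥ 4
    let a : Fin n := ⟨0, by omega⟩
    let b : Fin n := ⟨1, by omega⟩
    let c : Fin n := ⟨2, by omega⟩
    let d : Fin n := ⟨3, by omega⟩
    have hab : a ≠ b := by simp [a, b, Fin.ext_iff]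
    have hcd : c ≠ d := by simp [c, d, Fin.ext_iff]
    have hac : a ≠ c := by simp [a, c, Fin.ext_iff]
    have had : a ≠ d := by simp [a, d, Fin.ext_iff]
    set x : Equiv.Perm (Fin n) := Equiv.swap a b * Equiv.swap c d with hx
    have hxmem : x ∈ alternatingGroup (Fin n) := by
      rw [Equiv.Perm.mem_alternatingGroup, hx, map_mul,
        Equiv.Perm.sign_swap hab, Equiv.Perm.sign_swap hcd]
      norm_num
    rw [← hcl, Subgroup.mem_bot] at hxmem
    have hxa : x a = b := by
      rw [hx]
      simp [Equiv.swap_apply_of_ne_of_ne hac had]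
    rw [hxmem] at hxa
    exact hab hxa
  · have hodd := (main g (hS g hg)).2
    have : g ∈ alternatingGroup (Fin n) := hcl ▸ Subgroup.subset_closure hg
    rw [Equiv.Perm.mem_alternatingGroup, hodd] at this
    exact absurd this (by decide)
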